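/- arXiv:math/0006042 — 5 statements merged into one kernel-verified Lean document; each statement's English description precedes it below -/
import Mathlib

section
/- Let 𝔤 be a Lie algebroid over M of nonzero rank. If D : Γ(𝔤) → Γ(𝔤) is an ℝ-linear map and V a vector field on M satisfying (i) D([X,X']) = [D(X),X'] + [X,D(X')] and (ii) D(fX) = fD(X) + V(f)X for all sections X, X' and all f ∈ C∞(M), then necessarily ρ(D(X)) = [V, ρ(X)] for all X ∈ Γ(𝔤), where ρ denotes the anchor. -/
open scoped Manifold Derivation

local notation "∞" => (⊤ : ℕ∞)

/-- A Lie algebroid over a manifold `N` (modelled on `I`).  The space of smooth sections `Γ` is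
an abstract real Lie algebra and a module over the algebra `C^∞(N)` of smooth functions; vector
fields on `N` are represented as derivations of `C^∞(N)`.  The fiberwise data (`F`, `ev`,
`anchorAt`) allows pointwise statements about sections and about the anchor as a bundle map. -/
structure LieAlgebroid {E : Type*} [NormedAddCommGroup E] [NormedSpace ℝ E] {H : Type*}
    [TopologicalSpace H] (I : ModelWithCorners ℝ E H) (N : Type*) [TopologicalSpace N]
    [ChartedSpace H N] : Type _ where
  /-- the space of (smooth) sections -/
  Γ : Type
  [instLieRing : LieRing Γ]
  [instLieAlg : LieAlgebra ℝ Γ]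
  [instMod : Module C^∞⟮I, N; ℝ⟯ Γ]
  smul_compat : ∀ (r : ℝ) (f : C^∞⟮I, N; ℝ⟯) (X : Γ), (r • f) • X = r • (f • X)
  /-- the anchor, with vector fields on `N` represented as derivations of `C^∞(N)` -/
  anchor : Γ →ₗ[C^∞⟮I, N; ℝ⟯] Derivation ℝ C^∞⟮I, N; ℝ⟯ C^∞⟮I, N; ℝ⟯
  anchor_bracket : ∀ X Y : Γ, anchor ⁅X, Y⁆ = ⁅anchor X, anchor Y⁆
  leibniz : ∀ (X Y : Γ) (f : C^∞⟮I, N; ℝ⟯), ⁅X, f • Y⁆ = f • ⁅X, Y⁆ + anchor X f • Y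
  /-- the fibers of the underlying vector bundle -/
  F : N → Type
  [instFAdd : ∀ y, AddCommGroup (F y)]
  [instFMod : ∀ y, Module ℝ (F y)]
  /-- evaluation of a section at a point -/
  ev : ∀ y : N, Γ →ₗ[ℝ] F y
  ev_smul : ∀ (f : C^∞⟮I, N; ℝ⟯) (X : Γ) (y : N), ev y (f • X) = f y • ev y X
  /-- the anchor at the level of fibers -/
  anchorAt : ∀ y : N, F y →ₗ[ℝ] PointDerivation I y
  evalAt_anchor : ∀ (X : Γ) (y : N),
    Derivation.evalAt y (anchor X) = anchorAt y (ev y X)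

attribute [instance] LieAlgebroid.instLieRing LieAlgebroid.instLieAlg LieAlgebroid.instMod
  LieAlgebroid.instFAdd LieAlgebroid.instFMod

/-! Expanding `D ⁅X, g • Y⁆` once by (i) after the Leibniz rule and once by the Leibniz rule after
(i) and (ii) shows that the defect `a = ρ(D X) g - ⁅V, ρ X⁆ g` annihilates every section, hence
every function `ρ(Y) f`. With `t = ρ(X) g`, both `a * t` and `a * (a + V t)` are of this form;
applying `V` to `a * t = 0` then gives `a ^ 3 = 0`, and the ring of smooth functions is reduced. -/

instance ContMDiffMap.isReduced {E : Type*} [NormedAddCommGroup E] [NormedSpace ℝ E] {H : Type*}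
    [TopologicalSpace H] {I : ModelWithCorners ℝ E H} {M : Type*} [TopologicalSpace M]
    [ChartedSpace H M] : IsReduced C^∞⟮I, M; ℝ⟯ :=
  isReduced_of_injective ContMDiffMap.coeFnRingHom fun _ _ h ↦ ContMDiffMap.coe_injective h

theorem Derivation.eq_zero_of_mul_eq_zero_of_mul_add_eq_zero {R A : Type*} [CommRing R]
    [CommRing A] [Algebra R A] [IsReduced A] (V : Derivation R A A) {a t : A}
    (hat : a * t = 0) (haVt : a * (a + V t) = 0) : a = 0 := by
  have hV : a * V t + t * V a = 0 := by
    simpa only [smul_eq_mul, hat, map_zero] using (V.leibniz a t).symm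
  have hcube : a ^ 3 = 0 := by linear_combination a * haVt - a * hV + V a * hat
  exact IsNilpotent.eq_zero ⟨3, hcube⟩

namespace LieAlgebroid

variable {E : Type*} [NormedAddCommGroup E] [NormedSpace ℝ E] {H : Type*} [TopologicalSpace H]
  {I : ModelWithCorners ℝ E H} {M : Type*} [TopologicalSpace M] [ChartedSpace H M]
  {𝔤 : LieAlgebroid I M} {D : 𝔤.Γ →ₗ[ℝ] 𝔤.Γ} {V : Derivation ℝ C^∞⟮I, M; ℝ⟯ C^∞⟮I, M; ℝ⟯}

theorem anchor_sub_lie_apply_smul_eq_zero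
    (hD1 : ∀ X X' : 𝔤.Γ, D ⁅X, X'⁆ = ⁅D X, X'⁆ + ⁅X, D X'⁆)
    (hD2 : ∀ (f : C^∞⟮I, M; ℝ⟯) (X : 𝔤.Γ), D (f • X) = f • D X + V f • X)
    (X Y : 𝔤.Γ) (g : C^∞⟮I, M; ℝ⟯) :
    (𝔤.anchor (D X) g - ⁅V, 𝔤.anchor X⁆ g) • Y = 0 := by
  have h := hD1 X (g • Y)
  rw [𝔤.leibniz X Y g, map_add, hD2, hD2, hD1, hD2, lie_add, 𝔤.leibniz (D X) Y g,
    𝔤.leibniz X (D Y) g, 𝔤.leibniz X Y (V g), smul_add] at h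
  rw [Derivation.commutator_apply]
  linear_combination (norm := module) -h

theorem anchor_sub_lie_apply_mul_anchor_eq_zero
    (hD1 : ∀ X X' : 𝔤.Γ, D ⁅X, X'⁆ = ⁅D X, X'⁆ + ⁅X, D X'⁆)
    (hD2 : ∀ (f : C^∞⟮I, M; ℝ⟯) (X : 𝔤.Γ), D (f • X) = f • D X + V f • X)
    (X Y : 𝔤.Γ) (g f : C^∞⟮I, M; ℝ⟯) :
    (𝔤.anchor (D X) g - ⁅V, 𝔤.anchor X⁆ g) * 𝔤.anchor Y f = 0 := by
  have h := congrArg (𝔤.anchor · f) (anchor_sub_lie_apply_smul_eq_zero hD1 hD2 X Y g)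
  simpa only [map_smul, Derivation.smul_apply, smul_eq_mul, map_zero,
    Derivation.zero_apply] using h

end LieAlgebroid

theorem statement2_general
    {E : Type*} [NormedAddCommGroup E] [NormedSpace ℝ E] {H : Type*} [TopologicalSpace H]
    {I : ModelWithCorners ℝ E H} {M : Type*} [TopologicalSpace M] [ChartedSpace H M]
    (𝔤 : LieAlgebroid I M)
    (D : 𝔤.Γ →ₗ[ℝ] 𝔤.Γ) (V : Derivation ℝ C^∞⟮I, M; ℝ⟯ C^∞⟮I, M; ℝ⟯)
    (hD1 : ∀ X X' : 𝔤.Γ, D ⁅X, X'⁆ = ⁅D X, X'⁆ + ⁅X, D X'⁆)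
    (hD2 : ∀ (f : C^∞⟮I, M; ℝ⟯) (X : 𝔤.Γ), D (f • X) = f • D X + V f • X) :
    ∀ X : 𝔤.Γ, 𝔤.anchor (D X) = ⁅V, 𝔤.anchor X⁆ := by
  intro X
  refine Derivation.ext fun f ↦ ?_
  set a := 𝔤.anchor (D X) f - ⁅V, 𝔤.anchor X⁆ f with ha
  have hat : a * 𝔤.anchor X f = 0 :=
    LieAlgebroid.anchor_sub_lie_apply_mul_anchor_eq_zero hD1 hD2 X X f f
  have haVt : a * (a + V (𝔤.anchor X f)) = 0 := by
    have hsum : a + V (𝔤.anchor X f) = 𝔤.anchor (D X) f + 𝔤.anchor X (V f) := by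
      rw [ha, Derivation.commutator_apply]
      ring
    rw [hsum, mul_add, LieAlgebroid.anchor_sub_lie_apply_mul_anchor_eq_zero hD1 hD2 X (D X) f f,
      LieAlgebroid.anchor_sub_lie_apply_mul_anchor_eq_zero hD1 hD2 X X f (V f), add_zero]
  exact sub_eq_zero.mp (V.eq_zero_of_mul_eq_zero_of_mul_add_eq_zero hat haVt)

/-- On a Lie algebroid `𝔤` of nonzero rank, any pair `(D, V)` satisfying the
derivation conditions (i) and (ii) automatically satisfies (iii):
`ρ(D(X)) = [V, ρ(X)]` for all sections `X`. -/
theorem statement2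
    {E : Type*} [NormedAddCommGroup E] [NormedSpace ℝ E] {H : Type*} [TopologicalSpace H]
    {I : ModelWithCorners ℝ E H} {M : Type*} [TopologicalSpace M] [ChartedSpace H M]
    (𝔤 : LieAlgebroid I M)
    (hrank : ∀ x : M, ∃ v : 𝔤.F x, v ≠ 0)
    (D : 𝔤.Γ →ₗ[ℝ] 𝔤.Γ) (V : Derivation ℝ C^∞⟮I, M; ℝ⟯ C^∞⟮I, M; ℝ⟯)
    (hD1 : ∀ X X' : 𝔤.Γ, D ⁅X, X'⁆ = ⁅D X, X'⁆ + ⁅X, D X'⁆)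
    (hD2 : ∀ (f : C^∞⟮I, M; ℝ⟯) (X : 𝔤.Γ), D (f • X) = f • D X + V f • X) :
    ∀ X : 𝔤.Γ, 𝔤.anchor (D X) = ⁅V, 𝔤.anchor X⁆ :=
  statement2_general 𝔤 D V hD1 hD2
end

section
/- Let G be a Lie groupoid and let 𝔛^μ(G) denote the multiplicative vector fields on G and 𝔛^α_inv(G) the right-invariant α-vertical vector fields on G₁. Then [𝔛^μ(G), 𝔛^α_inv(G)] ⊆ 𝔛^α_inv(G): the Lie bracket of a multiplicative vector field with a right-invariant α-vertical vector field is again right-invariant and α-vertical. -/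
open scoped Manifold

local notation "∞" => (⊤ : ℕ∞)

section LieGroupoid

/- A Lie groupoid `G`:  `G₀` is the manifold of objects, `G₁` the manifold of arrows, and `P`
the manifold of composable pairs of arrows (the fibered product `G₁ ×_{G₀} G₁`, with its two
projections `p₁, p₂` and the multiplication `μ`).  Vector fields on a manifold are represented
as derivations of the algebra of smooth functions. -/
variable {E₀ : Type*} [NormedAddCommGroup E₀] [NormedSpace ℝ E₀] {H₀ : Type*}
  [TopologicalSpace H₀] {I₀ : ModelWithCorners ℝ E₀ H₀} {G₀ : Type*} [TopologicalSpace G₀]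
  [ChartedSpace H₀ G₀]
  {E₁ : Type*} [NormedAddCommGroup E₁] [NormedSpace ℝ E₁] {H₁ : Type*}
  [TopologicalSpace H₁] {I₁ : ModelWithCorners ℝ E₁ H₁} {G₁ : Type*} [TopologicalSpace G₁]
  [ChartedSpace H₁ G₁]
  {E₂ : Type*} [NormedAddCommGroup E₂] [NormedSpace ℝ E₂] {H₂ : Type*}
  [TopologicalSpace H₂] {I₂ : ModelWithCorners ℝ E₂ H₂} {P : Type*} [TopologicalSpace P]
  [ChartedSpace H₂ P]

/-- A vector field `X` on the manifold `G₁` of arrows is `α`-vertical if `dα ∘ X = 0`,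
i.e. `X` kills all functions pulled back along the source map `α`. -/
def IsAlphaVertical (α : C^∞⟮I₁, G₁; I₀, G₀⟯)
    (X : Derivation ℝ C^∞⟮I₁, G₁; ℝ⟯ C^∞⟮I₁, G₁; ℝ⟯) : Prop :=
  ∀ f : C^∞⟮I₀, G₀; ℝ⟯, X (f.comp α) = 0

/-- A vector field `X` on `G₁` is right invariant if the vector field `(X, 0)` on the manifold
`P` of composable pairs is projectable to `X` along the multiplication `μ`:  there is a vector
field `Ξ` on `P` which is `p₁`-related to `X`, `p₂`-related to `0` and `μ`-related to `X`. -/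
def IsRightInvariant (p₁ p₂ μ : C^∞⟮I₂, P; I₁, G₁⟯)
    (X : Derivation ℝ C^∞⟮I₁, G₁; ℝ⟯ C^∞⟮I₁, G₁; ℝ⟯) : Prop :=
  ∃ Ξ : Derivation ℝ C^∞⟮I₂, P; ℝ⟯ C^∞⟮I₂, P; ℝ⟯,
    (∀ f : C^∞⟮I₁, G₁; ℝ⟯, Ξ (f.comp p₁) = (X f).comp p₁) ∧
    (∀ f : C^∞⟮I₁, G₁; ℝ⟯, Ξ (f.comp p₂) = 0) ∧
    (∀ f : C^∞⟮I₁, G₁; ℝ⟯, Ξ (f.comp μ) = (X f).comp μ)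

/-- A multiplicative vector field on the Lie groupoid `G` is a pair of vector fields `W` on `G₁`
and `W₀` on `G₀` such that `W` is projectable to `W₀` along both `α` and `β`, `W₀` is projectable
to `W` along the unit map, and `(W, W)` on the manifold of composable pairs is projectable to `W`
along the multiplication `μ`. -/
def IsMultiplicative (α β : C^∞⟮I₁, G₁; I₀, G₀⟯) (uni : C^∞⟮I₀, G₀; I₁, G₁⟯)
    (p₁ p₂ μ : C^∞⟮I₂, P; I₁, G₁⟯)
    (W : Derivation ℝ C^∞⟮I₁, G₁; ℝ⟯ C^∞⟮I₁, G₁; ℝ⟯)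
    (W₀ : Derivation ℝ C^∞⟮I₀, G₀; ℝ⟯ C^∞⟮I₀, G₀; ℝ⟯) : Prop :=
  (∀ f : C^∞⟮I₀, G₀; ℝ⟯, W (f.comp α) = (W₀ f).comp α) ∧
  (∀ f : C^∞⟮I₀, G₀; ℝ⟯, W (f.comp β) = (W₀ f).comp β) ∧
  (∀ f : C^∞⟮I₁, G₁; ℝ⟯, W₀ (f.comp uni) = (W f).comp uni) ∧
  (∃ Ω : Derivation ℝ C^∞⟮I₂, P; ℝ⟯ C^∞⟮I₂, P; ℝ⟯,
    (∀ f : C^∞⟮I₁, G₁; ℝ⟯, Ω (f.comp p₁) = (W f).comp p₁) ∧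
    (∀ f : C^∞⟮I₁, G₁; ℝ⟯, Ω (f.comp p₂) = (W f).comp p₂) ∧
    (∀ f : C^∞⟮I₁, G₁; ℝ⟯, Ω (f.comp μ) = (W f).comp μ))

/-- For a Lie groupoid `G`, the Lie bracket of a multiplicative vector field
with a right invariant `α`-vertical vector field is again right invariant and `α`-vertical:
`[𝔛^μ(G), 𝔛^α_inv(G)] ⊆ 𝔛^α_inv(G)`. -/
theorem statement8
    (α β : C^∞⟮I₁, G₁; I₀, G₀⟯) (uni : C^∞⟮I₀, G₀; I₁, G₁⟯)
    (p₁ p₂ μ : C^∞⟮I₂, P; I₁, G₁⟯)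
    -- `P` is the fibered product `G₁ ×_{G₀} G₁` of composable pairs
    (hP : ∀ p : P, α (p₁ p) = β (p₂ p))
    (hPuniv : ∀ g g' : G₁, α g = β g' → ∃! p : P, p₁ p = g ∧ p₂ p = g')
    -- groupoid structure equations
    (hαuni : ∀ x, α (uni x) = x) (hβuni : ∀ x, β (uni x) = x)
    (hμα : ∀ p, α (μ p) = α (p₂ p)) (hμβ : ∀ p, β (μ p) = β (p₁ p))
    (W : Derivation ℝ C^∞⟮I₁, G₁; ℝ⟯ C^∞⟮I₁, G₁; ℝ⟯)
    (W₀ : Derivation ℝ C^∞⟮I₀, G₀; ℝ⟯ C^∞⟮I₀, G₀; ℝ⟯)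
    (hW : IsMultiplicative α β uni p₁ p₂ μ W W₀)
    (X : Derivation ℝ C^∞⟮I₁, G₁; ℝ⟯ C^∞⟮I₁, G₁; ℝ⟯)
    (hXv : IsAlphaVertical α X) (hXi : IsRightInvariant p₁ p₂ μ X) :
    IsAlphaVertical α ⁅W, X⁆ ∧ IsRightInvariant p₁ p₂ μ ⁅W, X⁆ := by
  obtain ⟨hWα, hWβ, hWuni, Ω, hΩ₁, hΩ₂, hΩμ⟩ := hW
  obtain ⟨Ξ, hΞ₁, hΞ₂, hΞμ⟩ := hXi
  constructor
  · intro f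
    rw [Derivation.commutator_apply, hXv, hWα, hXv, map_zero, sub_zero]
  · refine ⟨⁅Ω, Ξ⁆, fun f => ?_, fun f => ?_, fun f => ?_⟩
    · rw [Derivation.commutator_apply, Derivation.commutator_apply,
        hΞ₁, hΩ₁, hΩ₁, hΞ₁]
      rfl
    · rw [Derivation.commutator_apply, hΞ₂, hΩ₂, hΞ₂, map_zero, sub_zero]
    · rw [Derivation.commutator_apply, Derivation.commutator_apply,
        hΞμ, hΩμ, hΩμ, hΞμ]
      rfl

end LieGroupoid
end

section
/- Let G be a Lie groupoid with Lie algebroid 𝔤. Every multiplicative vector field W on G induces a derivation (ℒ_W, W|_{G₀}) on 𝔤, where ℒ_W(X) = [W, X] under the identification Γ(𝔤) ≅ 𝔛^α_inv(G), and the resulting map ℒ : 𝔛^μ(G) → Der(𝔤) is a homomorphism of Lie algebras. -/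
/-! Every clause reduces to one fact: brackets of `φ`-related vector fields are `φ`-related.
Multiplicativity of `W` and right invariance and `α`-verticality of `X` all say that some vector
fields are related along `α`, `β`, the unit map, `p₁`, `p₂` or `μ`, so `⁅W, X⁆` and `⁅W, W'⁆`
inherit these properties.  The remaining identities are the Jacobi identity and the Leibniz rule
`⁅W, g • X⁆ = g • ⁅W, X⁆ + W g • X` with `g = f ∘ β`. -/

open scoped Manifold

local notation "∞" => (⊤ : ℕ∞)

section LieGroupoid

/- A Lie groupoid `G`:  `G₀` is the manifold of objects, `G₁` the manifold of arrows, and `P`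
the manifold of composable pairs of arrows (the fibered product `G₁ ×_{G₀} G₁`, with its two
projections `p₁, p₂` and the multiplication `μ`).  Vector fields on a manifold are represented
as derivations of the algebra of smooth functions. -/
variable {E₀ : Type*} [NormedAddCommGroup E₀] [NormedSpace ℝ E₀] {H₀ : Type*}
  [TopologicalSpace H₀] {I₀ : ModelWithCorners ℝ E₀ H₀} {G₀ : Type*} [TopologicalSpace G₀]
  [ChartedSpace H₀ G₀]
  {E₁ : Type*} [NormedAddCommGroup E₁] [NormedSpace ℝ E₁] {H₁ : Type*}
  [TopologicalSpace H₁] {I₁ : ModelWithCorners ℝ E₁ H₁} {G₁ : Type*} [TopologicalSpace G₁]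
  [ChartedSpace H₁ G₁]
  {E₂ : Type*} [NormedAddCommGroup E₂] [NormedSpace ℝ E₂] {H₂ : Type*}
  [TopologicalSpace H₂] {I₂ : ModelWithCorners ℝ E₂ H₂} {P : Type*} [TopologicalSpace P]
  [ChartedSpace H₂ P]

theorem Derivation.commutator_smul {R A : Type*} [CommRing R] [CommRing A] [Algebra R A]
    (D₁ D₂ : Derivation R A A) (a : A) : ⁅D₁, a • D₂⁆ = a • ⁅D₁, D₂⁆ + D₁ a • D₂ := by
  ext b
  simp only [Derivation.commutator_apply, Derivation.add_apply, Derivation.smul_apply,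
    smul_eq_mul, Derivation.leibniz]
  ring

section Related

variable {𝕜 : Type*} [NontriviallyNormedField 𝕜]
  {E : Type*} [NormedAddCommGroup E] [NormedSpace 𝕜 E] {H : Type*} [TopologicalSpace H]
  {I : ModelWithCorners 𝕜 E H} {M : Type*} [TopologicalSpace M] [ChartedSpace H M]
  {E' : Type*} [NormedAddCommGroup E'] [NormedSpace 𝕜 E'] {H' : Type*} [TopologicalSpace H']
  {I' : ModelWithCorners 𝕜 E' H'} {M' : Type*} [TopologicalSpace M'] [ChartedSpace H' M']
  {φ : C^∞⟮I, M; I', M'⟯} {X X' : Derivation 𝕜 C^∞⟮I, M; 𝕜⟯ C^∞⟮I, M; 𝕜⟯}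
  {Y Y' : Derivation 𝕜 C^∞⟮I', M'; 𝕜⟯ C^∞⟮I', M'; 𝕜⟯}

def Derivation.IsRelated (φ : C^∞⟮I, M; I', M'⟯) (X : Derivation 𝕜 C^∞⟮I, M; 𝕜⟯ C^∞⟮I, M; 𝕜⟯)
    (Y : Derivation 𝕜 C^∞⟮I', M'; 𝕜⟯ C^∞⟮I', M'; 𝕜⟯) : Prop :=
  ∀ f : C^∞⟮I', M'; 𝕜⟯, X (f.comp φ) = (Y f).comp φ

theorem Derivation.IsRelated.lie (h : X.IsRelated φ Y) (h' : X'.IsRelated φ Y') :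
    (⁅X, X'⁆).IsRelated φ ⁅Y, Y'⁆ := by
  intro f
  rw [Derivation.commutator_apply, Derivation.commutator_apply, h', h, h, h']
  rfl

theorem Derivation.IsRelated.commutator_comp_eq_zero (h : X.IsRelated φ Y)
    (h' : ∀ f : C^∞⟮I', M'; 𝕜⟯, X' (f.comp φ) = 0) (f : C^∞⟮I', M'; 𝕜⟯) :
    ⁅X, X'⁆ (f.comp φ) = 0 := by
  rw [Derivation.commutator_apply, h' f, h f, h' (Y f), map_zero, sub_zero]

end Related

section Multiplicative

variable {α β : C^∞⟮I₁, G₁; I₀, G₀⟯} {uni : C^∞⟮I₀, G₀; I₁, G₁⟯} {p₁ p₂ μ : C^∞⟮I₂, P; I₁, G₁⟯}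
  {W W' X : Derivation ℝ C^∞⟮I₁, G₁; ℝ⟯ C^∞⟮I₁, G₁; ℝ⟯}
  {W₀ W₀' : Derivation ℝ C^∞⟮I₀, G₀; ℝ⟯ C^∞⟮I₀, G₀; ℝ⟯}

theorem isMultiplicative_iff : IsMultiplicative α β uni p₁ p₂ μ W W₀ ↔
    W.IsRelated α W₀ ∧ W.IsRelated β W₀ ∧ W₀.IsRelated uni W ∧
    ∃ Ω : Derivation ℝ C^∞⟮I₂, P; ℝ⟯ C^∞⟮I₂, P; ℝ⟯,
      Ω.IsRelated p₁ W ∧ Ω.IsRelated p₂ W ∧ Ω.IsRelated μ W :=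
  Iff.rfl

theorem isRightInvariant_iff : IsRightInvariant p₁ p₂ μ X ↔
    ∃ Ξ : Derivation ℝ C^∞⟮I₂, P; ℝ⟯ C^∞⟮I₂, P; ℝ⟯,
      Ξ.IsRelated p₁ X ∧ (∀ f : C^∞⟮I₁, G₁; ℝ⟯, Ξ (f.comp p₂) = 0) ∧ Ξ.IsRelated μ X :=
  Iff.rfl

theorem IsAlphaVertical.lie (hW : W.IsRelated α W₀) (hX : IsAlphaVertical α X) :
    IsAlphaVertical α ⁅W, X⁆ :=
  hW.commutator_comp_eq_zero hX

theorem IsRightInvariant.lie (hW : IsMultiplicative α β uni p₁ p₂ μ W W₀)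
    (hX : IsRightInvariant p₁ p₂ μ X) : IsRightInvariant p₁ p₂ μ ⁅W, X⁆ := by
  obtain ⟨-, -, -, Ω, hΩ₁, hΩ₂, hΩ₃⟩ := isMultiplicative_iff.1 hW
  obtain ⟨Ξ, hΞ₁, hΞ₂, hΞ₃⟩ := isRightInvariant_iff.1 hX
  exact ⟨⁅Ω, Ξ⁆, hΩ₁.lie hΞ₁, hΩ₂.commutator_comp_eq_zero hΞ₂, hΩ₃.lie hΞ₃⟩

theorem IsMultiplicative.lie (hW : IsMultiplicative α β uni p₁ p₂ μ W W₀)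
    (hW' : IsMultiplicative α β uni p₁ p₂ μ W' W₀') :
    IsMultiplicative α β uni p₁ p₂ μ ⁅W, W'⁆ ⁅W₀, W₀'⁆ := by
  obtain ⟨hα, hβ, huni, Ω, hΩ₁, hΩ₂, hΩ₃⟩ := isMultiplicative_iff.1 hW
  obtain ⟨hα', hβ', huni', Ω', hΩ₁', hΩ₂', hΩ₃'⟩ := isMultiplicative_iff.1 hW'
  exact ⟨hα.lie hα', hβ.lie hβ', huni.lie huni', ⁅Ω, Ω'⁆, hΩ₁.lie hΩ₁', hΩ₂.lie hΩ₂',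
    hΩ₃.lie hΩ₃'⟩

end Multiplicative

theorem statement9_general
    (α β : C^∞⟮I₁, G₁; I₀, G₀⟯) (uni : C^∞⟮I₀, G₀; I₁, G₁⟯)
    (p₁ p₂ μ : C^∞⟮I₂, P; I₁, G₁⟯)
    (W W' : Derivation ℝ C^∞⟮I₁, G₁; ℝ⟯ C^∞⟮I₁, G₁; ℝ⟯)
    (W₀ W₀' : Derivation ℝ C^∞⟮I₀, G₀; ℝ⟯ C^∞⟮I₀, G₀; ℝ⟯)
    (hW : IsMultiplicative α β uni p₁ p₂ μ W W₀)
    (hW' : IsMultiplicative α β uni p₁ p₂ μ W' W₀') :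
    -- `ℒ_W = [W, −]` maps sections of `𝔤` to sections of `𝔤` ...
    (∀ X, IsAlphaVertical α X → IsRightInvariant p₁ p₂ μ X →
      IsAlphaVertical α ⁅W, X⁆ ∧ IsRightInvariant p₁ p₂ μ ⁅W, X⁆) ∧
    -- ... is a derivation: condition (i) ...
    (∀ X X' : Derivation ℝ C^∞⟮I₁, G₁; ℝ⟯ C^∞⟮I₁, G₁; ℝ⟯, ⁅W, ⁅X, X'⁆⁆ = ⁅⁅W, X⁆, X'⁆ + ⁅X, ⁅W, X'⁆⁆) ∧
    -- ... condition (ii), with respect to the `C^∞(G₀)`-module structure `f • X = (f∘β) • X` ...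
    (∀ (X : Derivation ℝ C^∞⟮I₁, G₁; ℝ⟯ C^∞⟮I₁, G₁; ℝ⟯) (f : C^∞⟮I₀, G₀; ℝ⟯),
      ⁅W, f.comp β • X⁆ = f.comp β • ⁅W, X⁆ + (W₀ f).comp β • X) ∧
    -- ... and condition (iii): the anchor (projection along `β`) intertwines `ℒ_W` and `[W₀, −]`
    (∀ (X : Derivation ℝ C^∞⟮I₁, G₁; ℝ⟯ C^∞⟮I₁, G₁; ℝ⟯)
       (ρX : Derivation ℝ C^∞⟮I₀, G₀; ℝ⟯ C^∞⟮I₀, G₀; ℝ⟯),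
      (∀ f : C^∞⟮I₀, G₀; ℝ⟯, X (f.comp β) = (ρX f).comp β) →
      ∀ f : C^∞⟮I₀, G₀; ℝ⟯, ⁅W, X⁆ (f.comp β) = (⁅W₀, ρX⁆ f).comp β) ∧
    -- `ℒ` is a Lie algebra homomorphism: multiplicative fields are closed under brackets ...
    IsMultiplicative α β uni p₁ p₂ μ ⁅W, W'⁆ ⁅W₀, W₀'⁆ ∧
    -- ... and `ℒ_{[W,W']}` is the commutator of `ℒ_W` and `ℒ_{W'}`
    (∀ X : Derivation ℝ C^∞⟮I₁, G₁; ℝ⟯ C^∞⟮I₁, G₁; ℝ⟯, ⁅⁅W, W'⁆, X⁆ = ⁅W, ⁅W', X⁆⁆ - ⁅W', ⁅W, X⁆⁆) := by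
  have hWβ : W.IsRelated β W₀ := hW.2.1
  refine ⟨fun X hXv hXr => ⟨hXv.lie hW.1, hXr.lie hW⟩, fun X X' => LieRing.leibniz_lie W X X',
    fun X f => ?_, fun X ρX hρ => hWβ.lie hρ, hW.lie hW', fun X => lie_lie W W' X⟩
  rw [Derivation.commutator_smul, hWβ f]

/-- Every multiplicative vector field `(W, W₀)` on a Lie groupoid `G` induces
a derivation `ℒ(W) = (ℒ_W, W₀)` on the Lie algebroid `𝔤` of `G`, whose sections are the right
invariant `α`-vertical vector fields on `G₁` with module structure `f • X = (f ∘ β) • X` and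
anchor given by projecting along `β`; moreover `ℒ` is a homomorphism of Lie algebras. -/
theorem statement9
    (α β : C^∞⟮I₁, G₁; I₀, G₀⟯) (uni : C^∞⟮I₀, G₀; I₁, G₁⟯)
    (p₁ p₂ μ : C^∞⟮I₂, P; I₁, G₁⟯)
    (hP : ∀ p : P, α (p₁ p) = β (p₂ p))
    (hPuniv : ∀ g g' : G₁, α g = β g' → ∃! p : P, p₁ p = g ∧ p₂ p = g')
    (hαuni : ∀ x, α (uni x) = x) (hβuni : ∀ x, β (uni x) = x)
    (hμα : ∀ p, α (μ p) = α (p₂ p)) (hμβ : ∀ p, β (μ p) = β (p₁ p))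
    (W W' : Derivation ℝ C^∞⟮I₁, G₁; ℝ⟯ C^∞⟮I₁, G₁; ℝ⟯)
    (W₀ W₀' : Derivation ℝ C^∞⟮I₀, G₀; ℝ⟯ C^∞⟮I₀, G₀; ℝ⟯)
    (hW : IsMultiplicative α β uni p₁ p₂ μ W W₀)
    (hW' : IsMultiplicative α β uni p₁ p₂ μ W' W₀') :
    -- `ℒ_W = [W, −]` maps sections of `𝔤` to sections of `𝔤` ...
    (∀ X, IsAlphaVertical α X → IsRightInvariant p₁ p₂ μ X →
      IsAlphaVertical α ⁅W, X⁆ ∧ IsRightInvariant p₁ p₂ μ ⁅W, X⁆) ∧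
    -- ... is a derivation: condition (i) ...
    (∀ X X' : Derivation ℝ C^∞⟮I₁, G₁; ℝ⟯ C^∞⟮I₁, G₁; ℝ⟯, ⁅W, ⁅X, X'⁆⁆ = ⁅⁅W, X⁆, X'⁆ + ⁅X, ⁅W, X'⁆⁆) ∧
    -- ... condition (ii), with respect to the `C^∞(G₀)`-module structure `f • X = (f∘β) • X` ...
    (∀ (X : Derivation ℝ C^∞⟮I₁, G₁; ℝ⟯ C^∞⟮I₁, G₁; ℝ⟯) (f : C^∞⟮I₀, G₀; ℝ⟯),
      ⁅W, f.comp β • X⁆ = f.comp β • ⁅W, X⁆ + (W₀ f).comp β • X) ∧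
    -- ... and condition (iii): the anchor (projection along `β`) intertwines `ℒ_W` and `[W₀, −]`
    (∀ (X : Derivation ℝ C^∞⟮I₁, G₁; ℝ⟯ C^∞⟮I₁, G₁; ℝ⟯)
       (ρX : Derivation ℝ C^∞⟮I₀, G₀; ℝ⟯ C^∞⟮I₀, G₀; ℝ⟯),
      (∀ f : C^∞⟮I₀, G₀; ℝ⟯, X (f.comp β) = (ρX f).comp β) →
      ∀ f : C^∞⟮I₀, G₀; ℝ⟯, ⁅W, X⁆ (f.comp β) = (⁅W₀, ρX⁆ f).comp β) ∧
    -- `ℒ` is a Lie algebra homomorphism: multiplicative fields are closed under brackets ...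
    IsMultiplicative α β uni p₁ p₂ μ ⁅W, W'⁆ ⁅W₀, W₀'⁆ ∧
    -- ... and `ℒ_{[W,W']}` is the commutator of `ℒ_W` and `ℒ_{W'}`
    (∀ X : Derivation ℝ C^∞⟮I₁, G₁; ℝ⟯ C^∞⟮I₁, G₁; ℝ⟯, ⁅⁅W, W'⁆, X⁆ = ⁅W, ⁅W', X⁆⁆ - ⁅W', ⁅W, X⁆⁆) :=
  statement9_general α β uni p₁ p₂ μ W W' W₀ W₀' hW hW'

end LieGroupoid
end

section
/- Let 𝔤 and 𝔥 be Lie algebroids over M and N respectively, with ∇ an infinitesimal action of 𝔤 on 𝔥 along q : N → M over R. Then the semi-direct product bracket on sections of q*𝔤 ⊕ 𝔥, defined by [q*X ⊕ Y, q*X' ⊕ Y'] = q*[X,X'] ⊕ ([Y,Y'] + ∇_X(Y') − ∇_{X'}(Y)), satisfies the Jacobi identity, and together with the anchor ρ(q*X ⊕ Y) = R(X) + ρ(Y) (extended by C∞(N)-linearity and the Leibniz rule) makes 𝔤 ⋉ 𝔥 into a Lie algebroid over N. -/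
open scoped Manifold Derivation

local notation "∞" => (⊤ : ℕ∞)

/-- An infinitesimal action of a Lie algebroid `𝔤` over `M` on a Lie algebroid `𝔥` over `N`
along a map `q : N → M` (with `dq ∘ ρ_𝔥 = 0`), i.e. a `C^∞(M)`-linear Lie algebra homomorphism
`∇ : Γ𝔤 → Der(𝔥)`, `∇(X) = (D X, R X)`, with each `R X` projectable to `ρ_𝔤(X)` along `q`. -/
structure InfinitesimalAction
    {E : Type*} [NormedAddCommGroup E] [NormedSpace ℝ E] {H : Type*} [TopologicalSpace H]
    {I : ModelWithCorners ℝ E H} {N : Type*} [TopologicalSpace N] [ChartedSpace H N]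
    {E' : Type*} [NormedAddCommGroup E'] [NormedSpace ℝ E'] {H' : Type*} [TopologicalSpace H']
    {J : ModelWithCorners ℝ E' H'} {M : Type*} [TopologicalSpace M] [ChartedSpace H' M]
    (𝔤 : LieAlgebroid J M) (𝔥 : LieAlgebroid I N) (q : C^∞⟮I, N; J, M⟯) : Type _ where
  /-- the operator part `∇_X` of the action -/
  D : 𝔤.Γ → 𝔥.Γ →ₗ[ℝ] 𝔥.Γ
  /-- the vector field `R(X)` on `N` covering the action -/
  R : 𝔤.Γ →ₗ[ℝ] Derivation ℝ C^∞⟮I, N; ℝ⟯ C^∞⟮I, N; ℝ⟯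
  D_add : ∀ X X' Y, D (X + X') Y = D X Y + D X' Y
  /-- `C^∞(M)`-linearity of `∇` -/
  D_smul : ∀ (f : C^∞⟮J, M; ℝ⟯) X Y, D (f • X) Y = f.comp q • D X Y
  /-- `C^∞(M)`-linearity of `R` -/
  R_smul : ∀ (f : C^∞⟮J, M; ℝ⟯) X, R (f • X) = f.comp q • R X
  /-- `∇` is a Lie algebra homomorphism -/
  D_bracket : ∀ X X' Y, D ⁅X, X'⁆ Y = D X (D X' Y) - D X' (D X Y)
  R_bracket : ∀ X X', R ⁅X, X'⁆ = ⁅R X, R X'⁆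
  /-- each `(D X, R X)` is a derivation on `𝔥`:  condition (ii) -/
  D_leibniz : ∀ X (f : C^∞⟮I, N; ℝ⟯) Y, D X (f • Y) = f • D X Y + R X f • Y
  /-- condition (i) -/
  D_der : ∀ X Y Y', D X ⁅Y, Y'⁆ = ⁅D X Y, Y'⁆ + ⁅Y, D X Y'⁆
  /-- condition (iii) -/
  D_anchor : ∀ X Y, 𝔥.anchor (D X Y) = ⁅R X, 𝔥.anchor Y⁆
  /-- `R X` is projectable to `ρ_𝔤(X)` along `q` -/
  R_proj : ∀ X (f : C^∞⟮J, M; ℝ⟯), R X (f.comp q) = (𝔤.anchor X f).comp q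

/-- For an infinitesimal action `∇` of `𝔤` on `𝔥` along `q : N → M` over `R`,
the semi-direct product bracket
`[q*X ⊕ Y, q*X' ⊕ Y'] = q*[X,X'] ⊕ ([Y,Y'] + ∇_X(Y') − ∇_{X'}(Y))` on the spanning sections of
`q*𝔤 ⊕ 𝔥` is antisymmetric, satisfies the Jacobi identity, the anchor
`ρ(q*X ⊕ Y) = R(X) + ρ(Y)` takes it to the bracket of vector fields, and the Leibniz identity
holds; thus `𝔤 ⋉ 𝔥` is a Lie algebroid over `N`. -/
theorem statement16
    {E : Type*} [NormedAddCommGroup E] [NormedSpace ℝ E] {H : Type*} [TopologicalSpace H]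
    {I : ModelWithCorners ℝ E H} {N : Type*} [TopologicalSpace N] [ChartedSpace H N]
    {E' : Type*} [NormedAddCommGroup E'] [NormedSpace ℝ E'] {H' : Type*} [TopologicalSpace H']
    {J : ModelWithCorners ℝ E' H'} {M : Type*} [TopologicalSpace M] [ChartedSpace H' M]
    (𝔤 : LieAlgebroid J M) (𝔥 : LieAlgebroid I N) (q : C^∞⟮I, N; J, M⟯)
    (hq_surj : Function.Surjective q)
    (hq_subm : ∀ y : N, Function.Surjective (mfderiv I J q y))
    (h𝔥q : ∀ (y : N) (v : 𝔥.F y) (f : C^∞⟮J, M; ℝ⟯),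
      𝔥.anchorAt y v (f.comp q : C^∞⟮I, N; ℝ⟯) = 0)
    (A : InfinitesimalAction 𝔤 𝔥 q)
    -- the semi-direct product bracket on the spanning sections `q*X ⊕ Y`
    (B : 𝔤.Γ × 𝔥.Γ → 𝔤.Γ × 𝔥.Γ → 𝔤.Γ × 𝔥.Γ)
    (hB : ∀ u v : 𝔤.Γ × 𝔥.Γ,
      B u v = (⁅u.1, v.1⁆, ⁅u.2, v.2⁆ + A.D u.1 v.2 - A.D v.1 u.2))
    -- the anchor of the semi-direct product
    (ρ : 𝔤.Γ × 𝔥.Γ → Derivation ℝ C^∞⟮I, N; ℝ⟯ C^∞⟮I, N; ℝ⟯)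
    (hρ : ∀ u : 𝔤.Γ × 𝔥.Γ, ρ u = A.R u.1 + 𝔥.anchor u.2) :
    -- antisymmetry
    (∀ u v, B u v = - B v u) ∧
    -- the Jacobi identity
    (∀ u v w, B u (B v w) = B (B u v) w + B v (B u w)) ∧
    -- the anchor is a homomorphism to vector fields on `N`
    (∀ u v, ρ (B u v) = ⁅ρ u, ρ v⁆) ∧
    -- the Leibniz identity, on sections of the form `q*X' ⊕ f • Y'`
    (∀ (X X' : 𝔤.Γ) (Y Y' : 𝔥.Γ) (f : C^∞⟮I, N; ℝ⟯),
      B (X, Y) (X', f • Y')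
        = (⁅X, X'⁆, f • (⁅Y, Y'⁆ + A.D X Y') - A.D X' Y + ρ (X, Y) f • Y')) := by
  refine ⟨?_, ?_, ?_, ?_⟩
  · intro u v
    simp only [hB, Prod.neg_mk]
    refine Prod.ext (lie_skew u.1 v.1).symm ?_
    simp only
    rw [← lie_skew u.2 v.2]
    abel
  · intro u v w
    simp only [hB]
    refine Prod.ext ?_ ?_
    · simp only [Prod.fst_add]
      exact leibniz_lie u.1 v.1 w.1
    · simp only [Prod.snd_add, map_add, map_sub, A.D_der, A.D_bracket, lie_add, lie_sub,
        add_lie, sub_lie, leibniz_lie u.2 v.2 w.2]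
      rw [← lie_skew ((A.D w.1) u.2) v.2]
      abel
  · intro u v
    simp only [hρ, hB, map_add, map_sub, 𝔥.anchor_bracket, A.R_bracket, A.D_anchor,
      add_lie, lie_add]
    ext f
    simp [Derivation.commutator_apply]
    ring
  · intro X X' Y Y' f
    simp only [hB, hρ, 𝔥.leibniz, A.D_leibniz]
    refine Prod.ext rfl ?_
    simp only [smul_add, Derivation.add_apply, add_smul]
    abel
end

section
/- Let 𝔨, 𝔤, 𝔥 be Lie algebroids over N (with 𝔥 having base N and 𝔤 pulled back along a surjective submersion q : N → M) fitting in an exact sequence of vector bundles 0 → 𝔥 →^j 𝔨 →^π q*𝔤 → 0, where j is a Lie algebroid morphism over N and π comes from a Lie algebroid morphism 𝔨 → 𝔤 over q. If i : q*𝔤 → 𝔨 is a vector bundle splitting that preserves the bracket (curvature κ = 0), then ∇_X(Y) defined by j(∇_X(Y)) = [i(q*X), j(Y)]_𝔨 is an infinitesimal action of 𝔤 on 𝔥 along q over R(X) = ρ(i(q*X)), and 𝔨 is isomorphic as a Lie algebroid to the semi-direct product 𝔤 ⋉ 𝔥. -/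
open scoped Manifold Derivation

local notation "∞" => (⊤ : ℕ∞)

/-- Let `0 → 𝔥 → 𝔨 → q*𝔤 → 0` be an exact sequence with `j : 𝔥 → 𝔨` a Lie
algebroid morphism over `N` and `π` coming from a morphism `𝔨 → 𝔤` over `q`, and let
`i : q*𝔤 → 𝔨` be a splitting which preserves the bracket (vanishing curvature).  Then
`∇_X(Y) := j⁻¹[i(q*X), j(Y)]` is an infinitesimal action of `𝔤` on `𝔥` along `q` over
`R(X) = ρ(i(q*X))`, and `(X, Y) ↦ i(q*X) + j(Y)` identifies the semi-direct product `𝔤 ⋉ 𝔥`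
with `𝔨`, preserving brackets and anchors. -/
theorem statement17
    {E : Type*} [NormedAddCommGroup E] [NormedSpace ℝ E] {H : Type*} [TopologicalSpace H]
    {I : ModelWithCorners ℝ E H} {N : Type*} [TopologicalSpace N] [ChartedSpace H N]
    {E' : Type*} [NormedAddCommGroup E'] [NormedSpace ℝ E'] {H' : Type*} [TopologicalSpace H']
    {J : ModelWithCorners ℝ E' H'} {M : Type*} [TopologicalSpace M] [ChartedSpace H' M]
    (𝔤 : LieAlgebroid J M) (𝔥 𝔨 : LieAlgebroid I N) (q : C^∞⟮I, N; J, M⟯)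
    (hq_surj : Function.Surjective q)
    (hq_subm : ∀ y : N, Function.Surjective (mfderiv I J q y))
    (h𝔥q : ∀ (y : N) (v : 𝔥.F y) (f : C^∞⟮J, M; ℝ⟯),
      𝔥.anchorAt y v (f.comp q : C^∞⟮I, N; ℝ⟯) = 0)
    -- `j : 𝔥 → 𝔨` is an injective morphism of Lie algebroids over `N`
    (j : 𝔥.Γ →ₗ[ℝ] 𝔨.Γ) (hj_inj : Function.Injective j)
    (hj_smul : ∀ (f : C^∞⟮I, N; ℝ⟯) (Y : 𝔥.Γ), j (f • Y) = f • j Y)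
    (hj_bracket : ∀ Y Y' : 𝔥.Γ, j ⁅Y, Y'⁆ = ⁅j Y, j Y'⁆)
    (hj_anchor : ∀ Y : 𝔥.Γ, 𝔨.anchor (j Y) = 𝔥.anchor Y)
    -- `i` is the composite of `q*` with a vector bundle splitting of `π : 𝔨 → q*𝔤`
    (i : 𝔤.Γ →ₗ[ℝ] 𝔨.Γ)
    (hi_smul : ∀ (f : C^∞⟮J, M; ℝ⟯) (X : 𝔤.Γ), i (f • X) = f.comp q • i X)
    -- the splitting preserves the bracket, i.e. the curvature `κ` vanishes
    (hi_bracket : ∀ X X' : 𝔤.Γ, i ⁅X, X'⁆ = ⁅i X, i X'⁆)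
    -- `π` is a morphism of Lie algebroids over `q`, so the anchors are `q`-related
    (hi_anchor : ∀ (X : 𝔤.Γ) (f : C^∞⟮J, M; ℝ⟯),
      𝔨.anchor (i X) (f.comp q) = (𝔤.anchor X f).comp q)
    -- exactness: `j(𝔥)` is the kernel of `π`, so `[i(q*X), j(Y)]` lies in the image of `j`
    (Dm : 𝔤.Γ → 𝔥.Γ → 𝔥.Γ) (hDm : ∀ X Y, j (Dm X Y) = ⁅i X, j Y⁆) :
    -- `∇ = Dm` is an infinitesimal action of `𝔤` on `𝔥` along `q` over `R X = ρ(i(q*X))` :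
    -- it is `C^∞(M)`-linear,
    (∀ (f : C^∞⟮J, M; ℝ⟯) (X : 𝔤.Γ) (Y : 𝔥.Γ), Dm (f • X) Y = f.comp q • Dm X Y) ∧
    -- a Lie algebra homomorphism into the derivations of `𝔥`,
    (∀ (X X' : 𝔤.Γ) (Y : 𝔥.Γ), Dm ⁅X, X'⁆ Y = Dm X (Dm X' Y) - Dm X' (Dm X Y)) ∧
    -- each `(Dm X, R X)` being a derivation on `𝔥`:
    (∀ (X : 𝔤.Γ) (f : C^∞⟮I, N; ℝ⟯) (Y : 𝔥.Γ),
      Dm X (f • Y) = f • Dm X Y + 𝔨.anchor (i X) f • Y) ∧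
    (∀ (X : 𝔤.Γ) (Y Y' : 𝔥.Γ), Dm X ⁅Y, Y'⁆ = ⁅Dm X Y, Y'⁆ + ⁅Y, Dm X Y'⁆) ∧
    (∀ (X : 𝔤.Γ) (Y : 𝔥.Γ), 𝔥.anchor (Dm X Y) = ⁅𝔨.anchor (i X), 𝔥.anchor Y⁆) ∧
    -- and `(X, Y) ↦ i(q*X) + j(Y)` identifies `𝔤 ⋉ 𝔥` with `𝔨`:
    (∀ (X X' : 𝔤.Γ) (Y Y' : 𝔥.Γ),
      ⁅i X + j Y, i X' + j Y'⁆ = i ⁅X, X'⁆ + j (⁅Y, Y'⁆ + Dm X Y' - Dm X' Y)) ∧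
    (∀ (X : 𝔤.Γ) (Y : 𝔥.Γ), 𝔨.anchor (i X + j Y) = 𝔨.anchor (i X) + 𝔥.anchor Y) := by
  -- The anchor of 𝔥 kills pullbacks of functions along q
  have hkill : ∀ (Y : 𝔥.Γ) (f : C^∞⟮J, M; ℝ⟯),
      𝔥.anchor Y (f.comp q : C^∞⟮I, N; ℝ⟯) = 0 := by
    intro Y f
    ext y
    have h1 : Derivation.evalAt y (𝔥.anchor Y) (f.comp q : C^∞⟮I, N; ℝ⟯)
        = (𝔥.anchor Y (f.comp q : C^∞⟮I, N; ℝ⟯)) y := rfl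
    rw [𝔥.evalAt_anchor Y y] at h1
    rw [← h1, h𝔥q y (𝔥.ev y Y) f]
    rfl
  have leib1 : ∀ (A B : 𝔨.Γ) (f : C^∞⟮I, N; ℝ⟯),
      ⁅f • A, B⁆ = f • ⁅A, B⁆ - 𝔨.anchor B f • A := by
    intro A B f
    rw [← lie_skew, 𝔨.leibniz, ← lie_skew A B, smul_neg]
    abel
  have hsmul : ∀ (f : C^∞⟮J, M; ℝ⟯) (X : 𝔤.Γ) (Y : 𝔥.Γ),
      Dm (f • X) Y = f.comp q • Dm X Y := by
    intro f X Y
    apply hj_inj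
    rw [hDm, hi_smul, leib1, hj_smul, hDm, hj_anchor, hkill, zero_smul, sub_zero]
  have hbr : ∀ (X X' : 𝔤.Γ) (Y : 𝔥.Γ),
      Dm ⁅X, X'⁆ Y = Dm X (Dm X' Y) - Dm X' (Dm X Y) := by
    intro X X' Y
    apply hj_inj
    rw [map_sub, hDm, hDm, hDm, hDm, hDm, hi_bracket, lie_lie]
  have hder : ∀ (X : 𝔤.Γ) (f : C^∞⟮I, N; ℝ⟯) (Y : 𝔥.Γ),
      Dm X (f • Y) = f • Dm X Y + 𝔨.anchor (i X) f • Y := by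
    intro X f Y
    apply hj_inj
    rw [map_add, hDm, hj_smul, hj_smul, 𝔨.leibniz, hDm, hj_smul]
  have hderbr : ∀ (X : 𝔤.Γ) (Y Y' : 𝔥.Γ),
      Dm X ⁅Y, Y'⁆ = ⁅Dm X Y, Y'⁆ + ⁅Y, Dm X Y'⁆ := by
    intro X Y Y'
    apply hj_inj
    rw [map_add, hDm, hj_bracket, hj_bracket, hj_bracket, hDm, hDm, leibniz_lie]
  have hanch : ∀ (X : 𝔤.Γ) (Y : 𝔥.Γ),
      𝔥.anchor (Dm X Y) = ⁅𝔨.anchor (i X), 𝔥.anchor Y⁆ := by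
    intro X Y
    rw [← hj_anchor, hDm, 𝔨.anchor_bracket, hj_anchor]
  refine ⟨hsmul, hbr, hder, hderbr, hanch, ?_, ?_⟩
  · intro X X' Y Y'
    have h1 : ⁅j Y, i X'⁆ = -(j (Dm X' Y)) := by rw [← lie_skew, hDm]
    rw [add_lie, lie_add, lie_add, hi_bracket, ← hDm, h1, ← hj_bracket, map_sub, map_add]
    abel
  · intro X Y
    rw [map_add, hj_anchor]
end
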